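/- Let G be a group, γ : G × G × G → 𝕋 a normalized 2-cocycle (in the sense γ(q; x, y)γ(q; xy, z) = γ(x⁻¹q; y, z)γ(q; x, yz), γ(q; x, e) = γ(q; e, x) = 1), and β : G × G → 𝕋 a pseudo-trivialization of γ with β(q; e) = 1. Then the condition β(x; xy⁻¹) β(y; yx⁻¹) = 1 for all x, y ∈ G holds if and only if γ(x; xy⁻¹, yx⁻¹) = 1 for all x, y ∈ G. -/
import Mathlib


/-- For a normalized 2-cocycle `γ` with pseudo-trivialization `β` (with
`β(q;e) = 1`), the symmetry condition `β(x; xy⁻¹) β(y; yx⁻¹) = 1` holds for all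
`x, y ∈ G` iff `γ(x; xy⁻¹, yx⁻¹) = 1` for all `x, y ∈ G`. -/
theorem stmt5 {G : Type*} [Group G] (γ : G → G → G → Circle) (β : G → G → Circle)
    (hcocycle : ∀ q x y z, γ q x y * γ q (x * y) z = γ (x⁻¹ * q) y z * γ q x (y * z))
    (hnorm : ∀ q x, γ q x 1 = 1 ∧ γ q 1 x = 1)
    (hβnorm : ∀ q, β q 1 = 1)
    (hβ : ∀ q y z, γ q y z = β q y * β (y⁻¹ * q) z * (β q (y * z))⁻¹) :
    (∀ x y : G, β x (x * y⁻¹) * β y (y * x⁻¹) = 1) ↔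
    (∀ x y : G, γ x (x * y⁻¹) (y * x⁻¹) = 1) := by
  have key : ∀ x y : G, γ x (x * y⁻¹) (y * x⁻¹) = β x (x * y⁻¹) * β y (y * x⁻¹) := by
    intro x y
    have h := hβ x (x * y⁻¹) (y * x⁻¹)
    have e1 : (x * y⁻¹)⁻¹ * x = y := by group
    have e2 : (x * y⁻¹) * (y * x⁻¹) = 1 := by group
    rw [e1, e2, hβnorm] at h
    simpa using h
  constructor <;> intro h x y
  · rw [key]; exact h x y
  · rw [← key]; exact h x y
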